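/- Let s ∈ P and v = (1/η)Aᵀ(w_t − w₀) + b − (T_{w₀}ρ(w_t))·𝟙 ∈ ℝ^{|Y|}, with λ_t = 0, w_t − w₀ = −η∇ρ(w₀), ρ(w₀) ≥ 0, and As ≠ Aα_t. If sᵀv > 0 then the optimal Frank-Wolfe step-size γ_t = [(w_t − w₀ − w_s)ᵀ(w_t − w₀) + η sᵀb]/‖w_t − w₀ − w_s‖² is strictly positive, where w_s = −As. -/

import Mathlib

open RealInnerProductSpace

/-! With `d = w_t − w₀ = −η∇ρ(w₀)` we have `η ⟪∇ρ(w₀), d⟫ = −‖d‖²`, and since `s` sums to one,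
`η sᵀv = ⟪As, d⟫ + η sᵀb − η ρ(w₀) + ‖d‖²`. As `w_t − w₀ − w_s = d + As`, the numerator of `γ_t`
is therefore `η (sᵀv + ρ(w₀)) > 0`, while the denominator is `‖As − Aα_t‖² > 0`. -/

section InnerProductSpace

variable {E : Type*} [NormedAddCommGroup E] [InnerProductSpace ℝ E]

theorem sum_mul_affine_inner_eq_of_sum_eq_one {ι : Type*} [Fintype ι] {s : ι → ℝ}
    (hs : ∑ i, s i = 1) (c : ι → E) (d : E) (b : ι → ℝ) (a κ : ℝ) :
    ∑ i, s i * (a * ⟪c i, d⟫ + b i - κ) = a * ⟪∑ i, s i • c i, d⟫ + ∑ i, s i * b i - κ := by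
  simp only [mul_sub, mul_add, Finset.sum_sub_distrib, Finset.sum_add_distrib, ← Finset.sum_mul,
    hs, one_mul, sum_inner, real_inner_smul_left, Finset.mul_sum]
  congr 2
  exact Finset.sum_congr rfl fun i _ => by ring

theorem real_inner_self_eq_neg_mul_inner_of_eq_neg_smul {η : ℝ} {g d : E}
    (hd : d = -(η • g)) : ⟪d, d⟫ = -(η * ⟪g, d⟫) := by
  nth_rewrite 1 [hd]
  rw [inner_neg_left, real_inner_smul_left]

end InnerProductSpace

theorem stmt_12_general {p : ℕ} {Y : Type*} [Fintype Y]
    (c : Y → EuclideanSpace ℝ (Fin p)) (b : Y → ℝ) (η : ℝ) (hη : 0 < η)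
    (ρ : EuclideanSpace ℝ (Fin p) → ℝ) (w₀ wt ws : EuclideanSpace ℝ (Fin p))
    (hρ0 : 0 ≤ ρ w₀)
    (s αt : Y → ℝ)
    (hs : (∀ yb, 0 ≤ s yb) ∧ ∑ yb, s yb = 1)
    (hwt : wt - w₀ = -(η • gradient ρ w₀))
    (hwα : wt - w₀ = -(∑ yb, αt yb • c yb))
    (hws : ws = -(∑ yb, s yb • c yb))
    (hAs : (∑ yb, s yb • c yb) ≠ (∑ yb, αt yb • c yb))
    (v : Y → ℝ)
    (hv : ∀ yb, v yb = (1 / η) * ⟪c yb, wt - w₀⟫ + b yb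
        - (ρ w₀ + ⟪gradient ρ w₀, wt - w₀⟫))
    (hsv : 0 < ∑ yb, s yb * v yb) :
    0 < (⟪wt - w₀ - ws, wt - w₀⟫ + η * ∑ yb, s yb * b yb) / ‖wt - w₀ - ws‖ ^ 2 := by
  have hdiff : wt - w₀ - ws = (∑ yb, s yb • c yb) - ∑ yb, αt yb • c yb := by
    rw [hws, hwα]; abel
  have hden : 0 < ‖wt - w₀ - ws‖ ^ 2 := by
    rw [hdiff]; exact pow_pos (norm_pos_iff.mpr (sub_ne_zero.mpr hAs)) 2
  have hsv_eq : ∑ yb, s yb * v yb = (1 / η) * ⟪∑ yb, s yb • c yb, wt - w₀⟫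
      + ∑ yb, s yb * b yb - (ρ w₀ + ⟪gradient ρ w₀, wt - w₀⟫) := by
    simp only [hv]
    exact sum_mul_affine_inner_eq_of_sum_eq_one hs.2 c _ b _ _
  have hnum : ⟪wt - w₀ - ws, wt - w₀⟫ + η * ∑ yb, s yb * b yb
      = η * ∑ yb, s yb * v yb + η * ρ w₀ := by
    rw [hws, sub_neg_eq_add, inner_add_left, hsv_eq,
      real_inner_self_eq_neg_mul_inner_of_eq_neg_smul hwt]
    field_simp
    ring
  rw [hnum]
  exact div_pos (add_pos_of_pos_of_nonneg (mul_pos hη hsv) (mul_nonneg hη.le hρ0)) hden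

/-- Sufficient condition for a dual ascent direction: if `sᵀv > 0`, where
`v = (1/η)Aᵀ(w_t − w₀) + b − T_{w₀}ρ(w_t)·𝟙`, then the optimal Frank-Wolfe step-size
`γ_t = [(w_t − w₀ − w_s)ᵀ(w_t − w₀) + η sᵀb]/‖w_t − w₀ − w_s‖²` is strictly positive. -/
theorem stmt_12 {p : ℕ} {Y : Type*} [Fintype Y]
    (c : Y → EuclideanSpace ℝ (Fin p)) (b : Y → ℝ) (η : ℝ) (hη : 0 < η)
    (ρ : EuclideanSpace ℝ (Fin p) → ℝ) (w₀ wt ws : EuclideanSpace ℝ (Fin p))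
    (hρdiff : DifferentiableAt ℝ ρ w₀) (hρ0 : 0 ≤ ρ w₀)
    (s αt : Y → ℝ)
    (hs : (∀ yb, 0 ≤ s yb) ∧ ∑ yb, s yb = 1)
    (hwt : wt - w₀ = -(η • gradient ρ w₀))
    (hwα : wt - w₀ = -(∑ yb, αt yb • c yb))
    (hws : ws = -(∑ yb, s yb • c yb))
    (hAs : (∑ yb, s yb • c yb) ≠ (∑ yb, αt yb • c yb))
    (v : Y → ℝ)
    (hv : ∀ yb, v yb = (1 / η) * ⟪c yb, wt - w₀⟫ + b yb
        - (ρ w₀ + ⟪gradient ρ w₀, wt - w₀⟫))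
    (hsv : 0 < ∑ yb, s yb * v yb) :
    0 < (⟪wt - w₀ - ws, wt - w₀⟫ + η * ∑ yb, s yb * b yb) / ‖wt - w₀ - ws‖ ^ 2 :=
  stmt_12_general c b η hη ρ w₀ wt ws hρ0 s αt hs hwt hwα hws hAs v hv hsv
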